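/- arXiv:1506.08315 — 2 statements merged into one kernel-verified Lean document; each statement's English description precedes it below -/
import Mathlib

section
/- Let ε₁ and ε₂ be independent, identically distributed random vectors in ℝ^p on a probability space, with E[ε₁] = 0, E[‖ε₁‖²] < ∞, P(ε₁ = ε₂) = 0, and E[‖ε₁ − ε₂‖⁻¹] < ∞. Then 2·(E[‖ε₁ − ε₂‖⁻¹])²·E[‖ε₁‖²] ≥ 1. (This is the paper's claim that the asymptotic relative efficiency ARE(SR, PA) = 2c₀²E[‖ε‖²] is at least 1.) -/
open MeasureTheory ProbabilityTheory

lemma euclidean_abs_coord_le_norm {q : ℕ} (x : EuclideanSpace ℝ (Fin q)) (i : Fin q) :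
    |x i| ≤ ‖x‖ := by
  rw [EuclideanSpace.norm_eq, ← Real.sqrt_sq_eq_abs]
  apply Real.sqrt_le_sqrt
  have h : x i ^ 2 = ‖x i‖ ^ 2 := by rw [Real.norm_eq_abs, sq_abs]
  rw [h]
  exact Finset.single_le_sum (f := fun j => ‖x j‖ ^ 2) (fun j _ => sq_nonneg _) (Finset.mem_univ i)

/-- If `ε₁, ε₂` are i.i.d. random vectors in `ℝ^p` with mean zero,
finite second moment, `P(ε₁ = ε₂) = 0` and `E‖ε₁ - ε₂‖⁻¹ < ∞`, then
`2 (E‖ε₁ - ε₂‖⁻¹)² E‖ε₁‖² ≥ 1`; i.e. `ARE(SR, PA) ≥ 1`. -/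
theorem are_sr_pa_ge_one {p : ℕ} {Ω : Type*} [MeasureSpace Ω]
    [IsProbabilityMeasure (ℙ : Measure Ω)]
    (ε₁ ε₂ : Ω → EuclideanSpace ℝ (Fin p))
    (hm₁ : Measurable ε₁) (hm₂ : Measurable ε₂)
    (hindep : IndepFun ε₁ ε₂ ℙ)
    (hid : IdentDistrib ε₁ ε₂ ℙ ℙ)
    (hint : Integrable ε₁ ℙ)
    (hmean : ∫ ω, ε₁ ω = 0)
    (hsq : Integrable (fun ω => ‖ε₁ ω‖ ^ 2) ℙ)
    (hne : ℙ {ω | ε₁ ω = ε₂ ω} = 0)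
    (hinv : Integrable (fun ω => ‖ε₁ ω - ε₂ ω‖⁻¹) ℙ) :
    1 ≤ 2 * (∫ ω, ‖ε₁ ω - ε₂ ω‖⁻¹) ^ 2 * ∫ ω, ‖ε₁ ω‖ ^ 2 := by
  set X : Ω → EuclideanSpace ℝ (Fin p) := fun ω => ε₁ ω - ε₂ ω with hX
  have hmX : Measurable X := hm₁.sub hm₂
  -- basic integrability transfers
  have hint₂ : Integrable ε₂ ℙ := hid.integrable_iff.mp hint
  have hsq₂ : Integrable (fun ω => ‖ε₂ ω‖ ^ 2) ℙ :=
    ((hid.comp (measurable_norm.pow_const 2)).integrable_iff).mp hsq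
  have hXint : Integrable (fun ω => ‖X ω‖) ℙ := by
    refine (Integrable.add hint.norm hint₂.norm).mono' (hmX.norm.aestronglyMeasurable) ?_
    filter_upwards with ω
    simp only [hX, Real.norm_eq_abs, abs_norm]
    exact norm_sub_le _ _
  have hXsq : Integrable (fun ω => ‖X ω‖ ^ 2) ℙ := by
    refine (Integrable.add (hsq.const_mul 2) (hsq₂.const_mul 2)).mono'
      ((hmX.norm.pow_const 2).aestronglyMeasurable) ?_
    filter_upwards with ω
    simp only [hX, Real.norm_eq_abs, abs_pow, abs_norm, sq_abs]
    calc ‖ε₁ ω - ε₂ ω‖ ^ 2 ≤ (‖ε₁ ω‖ + ‖ε₂ ω‖) ^ 2 := by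
          gcongr; exact norm_sub_le _ _
      _ ≤ 2 * ‖ε₁ ω‖ ^ 2 + 2 * ‖ε₂ ω‖ ^ 2 := by nlinarith [sq_nonneg (‖ε₁ ω‖ - ‖ε₂ ω‖)]
  have hA : (0:ℝ) ≤ ∫ ω, ‖X ω‖ := integral_nonneg fun ω => norm_nonneg _
  have hC : (0:ℝ) ≤ ∫ ω, ‖X ω‖⁻¹ := integral_nonneg fun ω => inv_nonneg.mpr (norm_nonneg _)
  -- a.e. positivity of ‖X‖
  have hpos : ∀ᵐ ω ∂(ℙ : Measure Ω), 0 < ‖X ω‖ := by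
    have : ∀ᵐ ω ∂(ℙ : Measure Ω), ¬ (ε₁ ω = ε₂ ω) := by
      rw [ae_iff]; simpa using hne
    filter_upwards [this] with ω hω
    simpa [hX, norm_pos_iff, sub_eq_zero] using hω
  have two_conj : (2 : ℝ).HolderConjugate 2 := by constructor <;> norm_num
  have hofReal : ENNReal.ofReal (2 : ℝ) = 2 := by norm_num
  -- Step 1 : Cauchy–Schwarz gives 1 ≤ (∫‖X‖) * (∫‖X‖⁻¹)
  have hmemX : MemLp (fun ω => Real.sqrt ‖X ω‖) (ENNReal.ofReal (2:ℝ)) ℙ := by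
    rw [hofReal, memLp_two_iff_integrable_sq (hmX.norm.sqrt.aestronglyMeasurable)]
    refine hXint.congr ?_
    filter_upwards with ω
    rw [Real.sq_sqrt (norm_nonneg _)]
  have hmemXinv : MemLp (fun ω => Real.sqrt (‖X ω‖⁻¹)) (ENNReal.ofReal (2:ℝ)) ℙ := by
    rw [hofReal, memLp_two_iff_integrable_sq (show AEStronglyMeasurable (fun ω => Real.sqrt (‖X ω‖⁻¹)) ℙ from
      hmX.norm.inv.sqrt.aestronglyMeasurable)]
    refine hinv.congr ?_
    filter_upwards with ω
    rw [Real.sq_sqrt (inv_nonneg.mpr (norm_nonneg _))]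
  have step1 : 1 ≤ (∫ ω, ‖X ω‖) * (∫ ω, ‖X ω‖⁻¹) := by
    have hCS := integral_mul_le_Lp_mul_Lq_of_nonneg (μ := (ℙ : Measure Ω)) two_conj
      (Filter.Eventually.of_forall fun ω => Real.sqrt_nonneg _)
      (Filter.Eventually.of_forall fun ω => Real.sqrt_nonneg _) hmemX hmemXinv
    have hprod : (∫ ω, Real.sqrt ‖X ω‖ * Real.sqrt (‖X ω‖⁻¹)) = 1 := by
      have : (fun ω => Real.sqrt ‖X ω‖ * Real.sqrt (‖X ω‖⁻¹))
          =ᵐ[(ℙ : Measure Ω)] fun _ => (1 : ℝ) := by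
        filter_upwards [hpos] with ω hω
        rw [← Real.sqrt_mul (norm_nonneg _), mul_inv_cancel₀ (ne_of_gt hω), Real.sqrt_one]
      rw [integral_congr_ae this]; simp
    have hsqX : (∫ ω, Real.sqrt ‖X ω‖ ^ (2:ℝ)) = ∫ ω, ‖X ω‖ := by
      refine integral_congr_ae (Filter.Eventually.of_forall fun ω => ?_)
      show Real.sqrt ‖X ω‖ ^ (2:ℝ) = ‖X ω‖
      rw [show ((2:ℝ)) = ((2:ℕ):ℝ) by norm_num, Real.rpow_natCast,
        Real.sq_sqrt (norm_nonneg _)]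
    have hsqXinv : (∫ ω, Real.sqrt (‖X ω‖⁻¹) ^ (2:ℝ)) = ∫ ω, ‖X ω‖⁻¹ := by
      refine integral_congr_ae (Filter.Eventually.of_forall fun ω => ?_)
      show Real.sqrt (‖X ω‖⁻¹) ^ (2:ℝ) = ‖X ω‖⁻¹
      rw [show ((2:ℝ)) = ((2:ℕ):ℝ) by norm_num, Real.rpow_natCast,
        Real.sq_sqrt (inv_nonneg.mpr (norm_nonneg _))]
    rw [hprod, hsqX, hsqXinv, ← Real.sqrt_eq_rpow, ← Real.sqrt_eq_rpow] at hCS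
    nlinarith [hCS, Real.sq_sqrt hA, Real.sq_sqrt hC, Real.sqrt_nonneg (∫ ω, ‖X ω‖),
      Real.sqrt_nonneg (∫ ω, ‖X ω‖⁻¹)]
  -- Step 2 : (∫‖X‖)² ≤ ∫‖X‖²
  have step2 : (∫ ω, ‖X ω‖) ^ 2 ≤ ∫ ω, ‖X ω‖ ^ 2 := by
    have hmem2 : MemLp (fun ω => ‖X ω‖) (ENNReal.ofReal (2:ℝ)) ℙ := by
      rw [hofReal, memLp_two_iff_integrable_sq (hmX.norm.aestronglyMeasurable)]
      exact hXsq
    have hmem1 : MemLp (fun _ : Ω => (1:ℝ)) (ENNReal.ofReal (2:ℝ)) ℙ := memLp_const 1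
    have hCS := integral_mul_le_Lp_mul_Lq_of_nonneg (μ := (ℙ : Measure Ω)) two_conj
      (Filter.Eventually.of_forall fun ω => norm_nonneg (X ω))
      (Filter.Eventually.of_forall fun _ => zero_le_one) hmem2 hmem1
    simp only [mul_one, Real.one_rpow] at hCS
    rw [integral_const, probReal_univ, smul_eq_mul, one_mul,
      Real.one_rpow, mul_one] at hCS
    have hXsq' : (∫ ω, ‖X ω‖ ^ (2:ℝ)) = ∫ ω, ‖X ω‖ ^ 2 := by
      refine integral_congr_ae (Filter.Eventually.of_forall fun ω => ?_)
      show ‖X ω‖ ^ (2:ℝ) = ‖X ω‖ ^ 2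
      rw [show ((2:ℝ)) = ((2:ℕ):ℝ) by norm_num, Real.rpow_natCast]
    rw [hXsq', ← Real.sqrt_eq_rpow] at hCS
    have h2 : (0:ℝ) ≤ ∫ ω, ‖X ω‖ ^ 2 := integral_nonneg fun ω => sq_nonneg _
    nlinarith [hCS, Real.sq_sqrt h2, Real.sqrt_nonneg (∫ ω, ‖X ω‖ ^ 2)]
  -- Step 3 : ∫‖X‖² = 2 ∫‖ε₁‖²
  have hinner_meas : Measurable fun ω => (inner ℝ (ε₁ ω) (ε₂ ω) : ℝ) := hm₁.inner hm₂
  have hinner_int : Integrable (fun ω => (inner ℝ (ε₁ ω) (ε₂ ω) : ℝ)) ℙ := by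
    refine (hsq.add hsq₂).mono' hinner_meas.aestronglyMeasurable ?_
    filter_upwards with ω
    calc ‖(inner ℝ (ε₁ ω) (ε₂ ω) : ℝ)‖ ≤ ‖ε₁ ω‖ * ‖ε₂ ω‖ := norm_inner_le_norm _ _
      _ ≤ ‖ε₁ ω‖ ^ 2 + ‖ε₂ ω‖ ^ 2 := by nlinarith [sq_nonneg (‖ε₁ ω‖ - ‖ε₂ ω‖), norm_nonneg (ε₁ ω), norm_nonneg (ε₂ ω)]
  have hinner_zero : (∫ ω, (inner ℝ (ε₁ ω) (ε₂ ω) : ℝ)) = 0 := by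
    have hcoord : ∀ i : Fin p, (∫ ω, ε₁ ω i * ε₂ ω i) = 0 := by
      intro i
      have hL := (EuclideanSpace.proj i : EuclideanSpace ℝ (Fin p) →L[ℝ] ℝ)
      have h1 : Integrable (fun ω => ε₁ ω i) ℙ :=
        (EuclideanSpace.proj i : EuclideanSpace ℝ (Fin p) →L[ℝ] ℝ).integrable_comp hint
      have h2 : Integrable (fun ω => ε₂ ω i) ℙ :=
        (EuclideanSpace.proj i : EuclideanSpace ℝ (Fin p) →L[ℝ] ℝ).integrable_comp hint₂
      have hindep_i : IndepFun (fun ω => ε₁ ω i) (fun ω => ε₂ ω i) ℙ :=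
        hindep.comp (EuclideanSpace.proj i : EuclideanSpace ℝ (Fin p) →L[ℝ] ℝ).measurable
          (EuclideanSpace.proj i : EuclideanSpace ℝ (Fin p) →L[ℝ] ℝ).measurable
      have hmean_i : (∫ ω, ε₁ ω i) = 0 := by
        have := (EuclideanSpace.proj i : EuclideanSpace ℝ (Fin p) →L[ℝ] ℝ).integral_comp_comm hint
        simpa [hmean] using this
      have hmul := hindep_i.integral_mul_eq_mul_integral h1.aestronglyMeasurable h2.aestronglyMeasurable
      have hre : (fun ω => ε₁ ω i * ε₂ ω i) = (fun ω => ε₁ ω i) * fun ω => ε₂ ω i := rfl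
      rw [hre, hmul, hmean_i, zero_mul]
    have hexp : (fun ω => (inner ℝ (ε₁ ω) (ε₂ ω) : ℝ)) = fun ω => ∑ i, ε₁ ω i * ε₂ ω i := by
      funext ω
      simp [PiLp.inner_apply, RCLike.inner_apply, mul_comm]
    rw [hexp]
    have hterm : ∀ i : Fin p, Integrable (fun ω => ε₁ ω i * ε₂ ω i) ℙ := by
      intro i
      refine (hsq.add hsq₂).mono' ?_ ?_
      · exact (((EuclideanSpace.proj i).measurable.comp hm₁).mul
          ((EuclideanSpace.proj i).measurable.comp hm₂)).aestronglyMeasurable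
      · filter_upwards with ω
        have e1 : |ε₁ ω i| ≤ ‖ε₁ ω‖ := euclidean_abs_coord_le_norm (ε₁ ω) i
        have e2 : |ε₂ ω i| ≤ ‖ε₂ ω‖ := euclidean_abs_coord_le_norm (ε₂ ω) i
        have : ‖ε₁ ω i * ε₂ ω i‖ = |ε₁ ω i| * |ε₂ ω i| := by
          rw [Real.norm_eq_abs, abs_mul]
        rw [this]
        calc |ε₁ ω i| * |ε₂ ω i| ≤ ‖ε₁ ω‖ * ‖ε₂ ω‖ := by
              exact mul_le_mul e1 e2 (abs_nonneg _) (norm_nonneg _)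
          _ ≤ ‖ε₁ ω‖ ^ 2 + ‖ε₂ ω‖ ^ 2 := by nlinarith [sq_nonneg (‖ε₁ ω‖ - ‖ε₂ ω‖), norm_nonneg (ε₁ ω), norm_nonneg (ε₂ ω)]
    rw [integral_finset_sum _ (fun i _ => hterm i)]
    exact Finset.sum_eq_zero fun i _ => hcoord i
  have hsqeq : (∫ ω, ‖ε₂ ω‖ ^ 2) = ∫ ω, ‖ε₁ ω‖ ^ 2 :=
    ((hid.comp (measurable_norm.pow_const 2)).integral_eq).symm
  have step3 : (∫ ω, ‖X ω‖ ^ 2) = 2 * ∫ ω, ‖ε₁ ω‖ ^ 2 := by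
    have hptw : (fun ω => ‖X ω‖ ^ 2)
        = fun ω => ‖ε₁ ω‖ ^ 2 - 2 * (inner ℝ (ε₁ ω) (ε₂ ω) : ℝ) + ‖ε₂ ω‖ ^ 2 := by
      funext ω
      exact norm_sub_sq_real (ε₁ ω) (ε₂ ω)
    have h1 : Integrable (fun ω => ‖ε₁ ω‖ ^ 2 - 2 * (inner ℝ (ε₁ ω) (ε₂ ω) : ℝ)) ℙ :=
      hsq.sub (hinner_int.const_mul 2)
    have h2 : Integrable (fun ω => 2 * (inner ℝ (ε₁ ω) (ε₂ ω) : ℝ)) ℙ :=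
      hinner_int.const_mul 2
    rw [hptw, integral_add h1 hsq₂, integral_sub hsq h2, integral_const_mul,
      hinner_zero, hsqeq]
    ring
  -- combine
  have hv : (0:ℝ) ≤ ∫ ω, ‖ε₁ ω‖ ^ 2 := integral_nonneg fun ω => sq_nonneg _
  rw [step3] at step2
  nlinarith [step1, step2, hA, hC, sq_nonneg ((∫ ω, ‖X ω‖) * (∫ ω, ‖X ω‖⁻¹))]
end

section
/- Let n₁, n₂ ≥ 2, let X₁,…,X_{n₁} be i.i.d. random vectors in ℝ^p and Y₁,…,Y_{n₂} be i.i.d. random vectors in ℝ^p, with all vectors mutually independent; assume P(X₁ = X₂) = 0 and P(Y₁ = Y₂) = 0. Let A : ℝ^p → ℝ^p be a fixed invertible linear map, and set A₁ = E[U(A(X₁ − X₂))U(A(X₁ − X₂))ᵀ] and A₂ = E[U(A(Y₁ − Y₂))U(A(Y₁ − Y₂))ᵀ]. Then E[ Σ_{i₁≠i₂} Σ_{i₃≠i₄} ⟨U(A(X_{i₁} − X_{i₂})), U(A(Y_{i₃} − Y_{i₄}))⟩² ] = n₁(n₁−1)·n₂(n₂−1)·tr(A₁A₂), where the sums run over ordered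 pairs i₁ ≠ i₂ in {1,…,n₁} and i₃ ≠ i₄ in {1,…,n₂}. (This is the exact-mean, oracle version of the third trace estimator in Proposition 1 of the paper.) -/
open MeasureTheory ProbabilityTheory

/-- The spatial sign function `U(x) = x/‖x‖` for `x ≠ 0`, `U(0) = 0`. -/
noncomputable def spatialSign {p : ℕ} (x : EuclideanSpace ℝ (Fin p)) :
    EuclideanSpace ℝ (Fin p) :=
  ‖x‖⁻¹ • x

lemma measurable_spatialSign {p : ℕ} : Measurable (spatialSign (p := p)) :=
  Measurable.smul (measurable_norm.inv) measurable_id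

lemma norm_spatialSign_le {p : ℕ} (x : EuclideanSpace ℝ (Fin p)) : ‖spatialSign x‖ ≤ 1 := by
  rcases eq_or_ne x 0 with h | h
  · simp [spatialSign, h]
  · simp only [spatialSign, norm_smul, norm_inv, norm_norm]
    rw [inv_mul_cancel₀ (norm_ne_zero_iff.2 h)]

lemma abs_coord_le_norm {p : ℕ} (x : EuclideanSpace ℝ (Fin p)) (k : Fin p) : |x k| ≤ ‖x‖ := by
  rw [EuclideanSpace.norm_eq, ← Real.sqrt_sq_eq_abs]
  apply Real.sqrt_le_sqrt
  have := Finset.single_le_sum (f := fun i => ‖x i‖ ^ 2) (fun i _ => sq_nonneg _)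
    (Finset.mem_univ k)
  simpa [Real.norm_eq_abs, sq_abs] using this

set_option maxHeartbeats 1000000 in
/-- For two independent i.i.d. samples `X₁,…,X_{n₁}` and `Y₁,…,Y_{n₂}`
in `ℝ^p` with `P(X₁ = X₂) = 0` and `P(Y₁ = Y₂) = 0`, and a fixed invertible linear map `A`,
`E[∑_{i₁≠i₂} ∑_{i₃≠i₄} ⟨U(A(X_{i₁} - X_{i₂})), U(A(Y_{i₃} - Y_{i₄}))⟩²]
  = n₁(n₁-1) n₂(n₂-1) tr(A₁ A₂)`,
where `A₁ = E[U(A(X₁ - X₂))U(A(X₁ - X₂))ᵀ]` and `A₂ = E[U(A(Y₁ - Y₂))U(A(Y₁ - Y₂))ᵀ]`. -/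
theorem expectation_trace_estimator {p n₁ n₂ : ℕ} (hn₁ : 2 ≤ n₁) (hn₂ : 2 ≤ n₂)
    {Ω : Type*} [MeasureSpace Ω] [IsProbabilityMeasure (ℙ : Measure Ω)]
    (X : Fin n₁ → Ω → EuclideanSpace ℝ (Fin p))
    (Y : Fin n₂ → Ω → EuclideanSpace ℝ (Fin p))
    (hmX : ∀ i, Measurable (X i)) (hmY : ∀ s, Measurable (Y s))
    (hindep : iIndepFun (Sum.elim X Y) ℙ)
    (hidX : ∀ i j, IdentDistrib (X i) (X j) ℙ ℙ)
    (hidY : ∀ s t, IdentDistrib (Y s) (Y t) ℙ ℙ)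
    (hneX : ℙ {ω | X ⟨0, by omega⟩ ω = X ⟨1, by omega⟩ ω} = 0)
    (hneY : ℙ {ω | Y ⟨0, by omega⟩ ω = Y ⟨1, by omega⟩ ω} = 0)
    (A : EuclideanSpace ℝ (Fin p) ≃ₗ[ℝ] EuclideanSpace ℝ (Fin p))
    (A₁ A₂ : Matrix (Fin p) (Fin p) ℝ)
    (hA₁ : A₁ = Matrix.of fun k l => ∫ ω,
      spatialSign (A (X ⟨0, by omega⟩ ω - X ⟨1, by omega⟩ ω)) k *
      spatialSign (A (X ⟨0, by omega⟩ ω - X ⟨1, by omega⟩ ω)) l)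
    (hA₂ : A₂ = Matrix.of fun k l => ∫ ω,
      spatialSign (A (Y ⟨0, by omega⟩ ω - Y ⟨1, by omega⟩ ω)) k *
      spatialSign (A (Y ⟨0, by omega⟩ ω - Y ⟨1, by omega⟩ ω)) l) :
    ∫ ω, ∑ i₁ : Fin n₁, ∑ i₂ ∈ Finset.univ.erase i₁,
        ∑ i₃ : Fin n₂, ∑ i₄ ∈ Finset.univ.erase i₃,
          (inner ℝ (spatialSign (A (X i₁ ω - X i₂ ω)))
            (spatialSign (A (Y i₃ ω - Y i₄ ω))) : ℝ) ^ 2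
      = (n₁ : ℝ) * ((n₁ : ℝ) - 1) * ((n₂ : ℝ) * ((n₂ : ℝ) - 1)) * (A₁ * A₂).trace := by
  classical
  set G : EuclideanSpace ℝ (Fin p) × EuclideanSpace ℝ (Fin p) → EuclideanSpace ℝ (Fin p) :=
    fun q => spatialSign (A (q.1 - q.2)) with hGdef
  have hAmeas : Measurable (A : EuclideanSpace ℝ (Fin p) → EuclideanSpace ℝ (Fin p)) :=
    ((A : EuclideanSpace ℝ (Fin p) →ₗ[ℝ] EuclideanSpace ℝ (Fin p)).continuous_of_finiteDimensional).measurable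
  have hGmeas : Measurable G :=
    measurable_spatialSign.comp (hAmeas.comp (measurable_fst.sub measurable_snd))
  have hGnorm : ∀ q, ‖G q‖ ≤ 1 := fun q => norm_spatialSign_le _
  -- coordinates of G
  have hφmeas : ∀ k l : Fin p, Measurable (fun q : EuclideanSpace ℝ (Fin p) × EuclideanSpace ℝ (Fin p) => G q k * G q l) := fun k l =>
    ((measurable_pi_apply k).comp ((WithLp.measurable_ofLp 2 _).comp hGmeas)).mul ((measurable_pi_apply l).comp ((WithLp.measurable_ofLp 2 _).comp hGmeas))
  have hφbound : ∀ (q : EuclideanSpace ℝ (Fin p) × EuclideanSpace ℝ (Fin p)) (k l : Fin p), |G q k * G q l| ≤ 1 := by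
    intro q k l
    rw [abs_mul]
    calc |G q k| * |G q l| ≤ ‖G q‖ * ‖G q‖ :=
          mul_le_mul (abs_coord_le_norm _ _) (abs_coord_le_norm _ _) (abs_nonneg _) (norm_nonneg _)
      _ ≤ 1 * 1 := mul_le_mul (hGnorm q) (hGnorm q) (norm_nonneg _) zero_le_one
      _ = 1 := one_mul 1
  have hmelim : ∀ i, Measurable (Sum.elim X Y i) := by
    rintro (i | s)
    · exact hmX i
    · exact hmY s
  -- distribution of pairs of distinct X's (resp. Y's)
  have mapX : ∀ i j : Fin n₁, i ≠ j →
      Measure.map (fun ω => (X i ω, X j ω)) ℙ = (Measure.map (X i) ℙ).prod (Measure.map (X j) ℙ) := by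
    intro i j hij
    exact (indepFun_iff_map_prod_eq_prod_map_map (hmX i).aemeasurable (hmX j).aemeasurable).1
      (hindep.indepFun (i := Sum.inl i) (j := Sum.inl j) (by simp [hij]))
  have mapY : ∀ s t : Fin n₂, s ≠ t →
      Measure.map (fun ω => (Y s ω, Y t ω)) ℙ = (Measure.map (Y s) ℙ).prod (Measure.map (Y t) ℙ) := by
    intro s t hst
    exact (indepFun_iff_map_prod_eq_prod_map_map (hmY s).aemeasurable (hmY t).aemeasurable).1
      (hindep.indepFun (i := Sum.inr s) (j := Sum.inr t) (by simp [hst]))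
  have h01X : (⟨0, by omega⟩ : Fin n₁) ≠ ⟨1, by omega⟩ := by
    simp [Fin.ext_iff]
  have h01Y : (⟨0, by omega⟩ : Fin n₂) ≠ ⟨1, by omega⟩ := by
    simp [Fin.ext_iff]
  have idPairX : ∀ i j : Fin n₁, i ≠ j →
      IdentDistrib (fun ω => (X i ω, X j ω))
        (fun ω => (X ⟨0, by omega⟩ ω, X ⟨1, by omega⟩ ω)) ℙ ℙ := by
    intro i j hij
    refine ⟨((hmX i).prodMk (hmX j)).aemeasurable,
      ((hmX _).prodMk (hmX _)).aemeasurable, ?_⟩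
    rw [mapX i j hij, mapX _ _ h01X, (hidX i ⟨0, by omega⟩).map_eq,
      (hidX j ⟨1, by omega⟩).map_eq]
  have idPairY : ∀ s t : Fin n₂, s ≠ t →
      IdentDistrib (fun ω => (Y s ω, Y t ω))
        (fun ω => (Y ⟨0, by omega⟩ ω, Y ⟨1, by omega⟩ ω)) ℙ ℙ := by
    intro s t hst
    refine ⟨((hmY s).prodMk (hmY t)).aemeasurable,
      ((hmY _).prodMk (hmY _)).aemeasurable, ?_⟩
    rw [mapY s t hst, mapY _ _ h01Y, (hidY s ⟨0, by omega⟩).map_eq,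
      (hidY t ⟨1, by omega⟩).map_eq]
  -- the matrix entries
  have hA₁entry : ∀ (i j : Fin n₁), i ≠ j → ∀ k l : Fin p,
      ∫ ω, G (X i ω, X j ω) k * G (X i ω, X j ω) l = A₁ k l := by
    intro i j hij k l
    rw [hA₁]
    exact ((idPairX i j hij).comp (hφmeas k l)).integral_eq
  have hA₂entry : ∀ (s t : Fin n₂), s ≠ t → ∀ k l : Fin p,
      ∫ ω, G (Y s ω, Y t ω) k * G (Y s ω, Y t ω) l = A₂ k l := by
    intro s t hst k l
    rw [hA₂]
    exact ((idPairY s t hst).comp (hφmeas k l)).integral_eq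
  -- symmetry of A₂
  have hA₂symm : ∀ k l : Fin p, A₂ l k = A₂ k l := by
    intro k l
    rw [hA₂]
    simp only [Matrix.of_apply]
    exact congrArg (integral ℙ) (funext fun ω => mul_comm _ _)
  -- integrability facts
  have hintcoordX : ∀ (i j : Fin n₁) (k l : Fin p),
      Integrable (fun ω => G (X i ω, X j ω) k * G (X i ω, X j ω) l) ℙ := by
    intro i j k l
    refine (integrable_const (1 : ℝ)).mono'
      (((hφmeas k l).comp ((hmX i).prodMk (hmX j))).aestronglyMeasurable)
      (Filter.Eventually.of_forall fun ω => ?_)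
    rw [Real.norm_eq_abs]; exact hφbound (X i ω, X j ω) k l
  have hintcoordY : ∀ (s t : Fin n₂) (k l : Fin p),
      Integrable (fun ω => G (Y s ω, Y t ω) k * G (Y s ω, Y t ω) l) ℙ := by
    intro s t k l
    refine (integrable_const (1 : ℝ)).mono'
      (((hφmeas k l).comp ((hmY s).prodMk (hmY t))).aestronglyMeasurable)
      (Filter.Eventually.of_forall fun ω => ?_)
    rw [Real.norm_eq_abs]; exact hφbound (Y s ω, Y t ω) k l
  -- the key per-term expectation
  have key : ∀ (i₁ i₂ : Fin n₁), i₁ ≠ i₂ → ∀ (i₃ i₄ : Fin n₂), i₃ ≠ i₄ →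
      ∫ ω, (inner ℝ (spatialSign (A (X i₁ ω - X i₂ ω)))
        (spatialSign (A (Y i₃ ω - Y i₄ ω))) : ℝ) ^ 2 = (A₁ * A₂).trace := by
    intro i₁ i₂ h12 i₃ i₄ h34
    have hWZindep : IndepFun (fun ω => (X i₁ ω, X i₂ ω)) (fun ω => (Y i₃ ω, Y i₄ ω)) ℙ :=
      hindep.indepFun_prodMk_prodMk hmelim (Sum.inl i₁) (Sum.inl i₂) (Sum.inr i₃)
        (Sum.inr i₄) (by simp) (by simp) (by simp) (by simp)
    have expand : ∀ ω, (inner ℝ (spatialSign (A (X i₁ ω - X i₂ ω)))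
        (spatialSign (A (Y i₃ ω - Y i₄ ω))) : ℝ) ^ 2
        = ∑ k : Fin p, ∑ l : Fin p,
            (G (X i₁ ω, X i₂ ω) k * G (X i₁ ω, X i₂ ω) l) *
            (G (Y i₃ ω, Y i₄ ω) k * G (Y i₃ ω, Y i₄ ω) l) := by
      intro ω
      have : (inner ℝ (spatialSign (A (X i₁ ω - X i₂ ω)))
          (spatialSign (A (Y i₃ ω - Y i₄ ω))) : ℝ)
          = ∑ k : Fin p, G (X i₁ ω, X i₂ ω) k * G (Y i₃ ω, Y i₄ ω) k := by
        simp [PiLp.inner_apply, RCLike.inner_apply, hGdef]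
        exact Finset.sum_congr rfl fun _ _ => mul_comm _ _
      rw [this, sq, Finset.sum_mul_sum]
      exact Finset.sum_congr rfl fun k _ => Finset.sum_congr rfl fun l _ => by ring
    have hintprod : ∀ k l : Fin p, Integrable (fun ω =>
        (G (X i₁ ω, X i₂ ω) k * G (X i₁ ω, X i₂ ω) l) *
        (G (Y i₃ ω, Y i₄ ω) k * G (Y i₃ ω, Y i₄ ω) l)) ℙ := by
      intro k l
      refine (integrable_const (1 : ℝ)).mono'
        ((((hφmeas k l).comp ((hmX i₁).prodMk (hmX i₂))).mul
          ((hφmeas k l).comp ((hmY i₃).prodMk (hmY i₄)))).aestronglyMeasurable)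
        (Filter.Eventually.of_forall fun ω => ?_)
      rw [Real.norm_eq_abs, abs_mul]
      calc |G (X i₁ ω, X i₂ ω) k * G (X i₁ ω, X i₂ ω) l| *
            |G (Y i₃ ω, Y i₄ ω) k * G (Y i₃ ω, Y i₄ ω) l| ≤ 1 * 1 :=
            mul_le_mul (hφbound _ _ _) (hφbound _ _ _) (abs_nonneg _) zero_le_one
        _ = 1 := one_mul 1
    calc ∫ ω, (inner ℝ (spatialSign (A (X i₁ ω - X i₂ ω)))
          (spatialSign (A (Y i₃ ω - Y i₄ ω))) : ℝ) ^ 2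
        = ∫ ω, ∑ k : Fin p, ∑ l : Fin p,
            (G (X i₁ ω, X i₂ ω) k * G (X i₁ ω, X i₂ ω) l) *
            (G (Y i₃ ω, Y i₄ ω) k * G (Y i₃ ω, Y i₄ ω) l) := by
          exact congrArg (integral ℙ) (funext expand)
      _ = ∑ k : Fin p, ∑ l : Fin p, ∫ ω,
            (G (X i₁ ω, X i₂ ω) k * G (X i₁ ω, X i₂ ω) l) *
            (G (Y i₃ ω, Y i₄ ω) k * G (Y i₃ ω, Y i₄ ω) l) := by
          rw [integral_finset_sum _ fun k _ => integrable_finset_sum _ fun l _ => hintprod k l]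
          exact Finset.sum_congr rfl fun k _ =>
            integral_finset_sum _ fun l _ => hintprod k l
      _ = ∑ k : Fin p, ∑ l : Fin p, A₁ k l * A₂ k l := by
          refine Finset.sum_congr rfl fun k _ => Finset.sum_congr rfl fun l _ => ?_
          have hind := hWZindep.comp (hφmeas k l) (hφmeas k l)
          have heq : ∫ ω, (G (X i₁ ω, X i₂ ω) k * G (X i₁ ω, X i₂ ω) l) *
              (G (Y i₃ ω, Y i₄ ω) k * G (Y i₃ ω, Y i₄ ω) l)
              = (∫ ω, G (X i₁ ω, X i₂ ω) k * G (X i₁ ω, X i₂ ω) l) *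
                ∫ ω, G (Y i₃ ω, Y i₄ ω) k * G (Y i₃ ω, Y i₄ ω) l :=
            hind.integral_fun_mul_eq_mul_integral (hintcoordX i₁ i₂ k l).aestronglyMeasurable (hintcoordY i₃ i₄ k l).aestronglyMeasurable
          rw [heq, hA₁entry i₁ i₂ h12 k l, hA₂entry i₃ i₄ h34 k l]
      _ = (A₁ * A₂).trace := by
          rw [Matrix.trace]
          simp only [Matrix.diag_apply, Matrix.mul_apply]
          exact Finset.sum_congr rfl fun k _ => Finset.sum_congr rfl fun l _ => by
            rw [hA₂symm k l]
  -- integrability of each term of the big sum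
  have hint : ∀ (i₁ i₂ : Fin n₁) (i₃ i₄ : Fin n₂),
      Integrable (fun ω => (inner ℝ (spatialSign (A (X i₁ ω - X i₂ ω)))
        (spatialSign (A (Y i₃ ω - Y i₄ ω))) : ℝ) ^ 2) ℙ := by
    intro i₁ i₂ i₃ i₄
    have hmeas : Measurable (fun ω => (inner ℝ (spatialSign (A (X i₁ ω - X i₂ ω)))
        (spatialSign (A (Y i₃ ω - Y i₄ ω))) : ℝ) ^ 2) := by
      apply Measurable.pow_const
      exact Measurable.inner
        (measurable_spatialSign.comp (hAmeas.comp ((hmX i₁).sub (hmX i₂))))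
        (measurable_spatialSign.comp (hAmeas.comp ((hmY i₃).sub (hmY i₄))))
    refine (integrable_const (1 : ℝ)).mono' hmeas.aestronglyMeasurable
      (Filter.Eventually.of_forall fun ω => ?_)
    rw [Real.norm_eq_abs, abs_pow, sq_abs, sq]
    have h1 : |(inner ℝ (spatialSign (A (X i₁ ω - X i₂ ω)))
        (spatialSign (A (Y i₃ ω - Y i₄ ω))) : ℝ)| ≤ 1 := by
      calc |(inner ℝ (spatialSign (A (X i₁ ω - X i₂ ω)))
            (spatialSign (A (Y i₃ ω - Y i₄ ω))) : ℝ)|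
          ≤ ‖spatialSign (A (X i₁ ω - X i₂ ω))‖ * ‖spatialSign (A (Y i₃ ω - Y i₄ ω))‖ :=
            abs_real_inner_le_norm _ _
        _ ≤ 1 * 1 := mul_le_mul (norm_spatialSign_le _) (norm_spatialSign_le _)
            (norm_nonneg _) zero_le_one
        _ = 1 := one_mul 1
    calc (inner ℝ (spatialSign (A (X i₁ ω - X i₂ ω)))
          (spatialSign (A (Y i₃ ω - Y i₄ ω))) : ℝ) *
          (inner ℝ (spatialSign (A (X i₁ ω - X i₂ ω)))
          (spatialSign (A (Y i₃ ω - Y i₄ ω))) : ℝ)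
        ≤ |(inner ℝ (spatialSign (A (X i₁ ω - X i₂ ω)))
          (spatialSign (A (Y i₃ ω - Y i₄ ω))) : ℝ)| *
          |(inner ℝ (spatialSign (A (X i₁ ω - X i₂ ω)))
          (spatialSign (A (Y i₃ ω - Y i₄ ω))) : ℝ)| := by
          rw [← abs_mul]; exact le_abs_self _
      _ ≤ 1 * 1 := mul_le_mul h1 h1 (abs_nonneg _) zero_le_one
      _ = 1 := one_mul 1
  -- pull the integral inside the sums
  rw [integral_finset_sum _ fun i₁ _ => integrable_finset_sum _ fun i₂ _ =>
    integrable_finset_sum _ fun i₃ _ => integrable_finset_sum _ fun i₄ _ => hint i₁ i₂ i₃ i₄]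
  have : ∀ i₁ : Fin n₁, ∫ ω, ∑ i₂ ∈ Finset.univ.erase i₁,
      ∑ i₃ : Fin n₂, ∑ i₄ ∈ Finset.univ.erase i₃,
        (inner ℝ (spatialSign (A (X i₁ ω - X i₂ ω)))
          (spatialSign (A (Y i₃ ω - Y i₄ ω))) : ℝ) ^ 2
      = ((n₁ : ℝ) - 1) * ((n₂ : ℝ) * ((n₂ : ℝ) - 1)) * (A₁ * A₂).trace := by
    intro i₁
    rw [integral_finset_sum _ fun i₂ _ => integrable_finset_sum _ fun i₃ _ =>
      integrable_finset_sum _ fun i₄ _ => hint i₁ i₂ i₃ i₄]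
    have h2 : ∀ i₂ ∈ Finset.univ.erase i₁, ∫ ω, ∑ i₃ : Fin n₂,
        ∑ i₄ ∈ Finset.univ.erase i₃,
          (inner ℝ (spatialSign (A (X i₁ ω - X i₂ ω)))
            (spatialSign (A (Y i₃ ω - Y i₄ ω))) : ℝ) ^ 2
        = ((n₂ : ℝ) * ((n₂ : ℝ) - 1)) * (A₁ * A₂).trace := by
      intro i₂ hi₂
      have h12 : i₁ ≠ i₂ := (Finset.ne_of_mem_erase hi₂).symm
      rw [integral_finset_sum _ fun i₃ _ => integrable_finset_sum _ fun i₄ _ =>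
        hint i₁ i₂ i₃ i₄]
      have h3 : ∀ i₃ : Fin n₂, ∫ ω, ∑ i₄ ∈ Finset.univ.erase i₃,
          (inner ℝ (spatialSign (A (X i₁ ω - X i₂ ω)))
            (spatialSign (A (Y i₃ ω - Y i₄ ω))) : ℝ) ^ 2
          = ((n₂ : ℝ) - 1) * (A₁ * A₂).trace := by
        intro i₃
        rw [integral_finset_sum _ fun i₄ _ => hint i₁ i₂ i₃ i₄]
        have h4 : ∀ i₄ ∈ Finset.univ.erase i₃,
            ∫ ω, (inner ℝ (spatialSign (A (X i₁ ω - X i₂ ω)))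
              (spatialSign (A (Y i₃ ω - Y i₄ ω))) : ℝ) ^ 2 = (A₁ * A₂).trace := by
          intro i₄ hi₄
          exact key i₁ i₂ h12 i₃ i₄ (Finset.ne_of_mem_erase hi₄).symm
        rw [Finset.sum_congr rfl h4, Finset.sum_const, Finset.card_erase_of_mem
          (Finset.mem_univ _), Finset.card_univ, Fintype.card_fin, nsmul_eq_mul,
          Nat.cast_sub (by omega), Nat.cast_one]
      rw [Finset.sum_congr rfl fun i₃ _ => h3 i₃, Finset.sum_const, Finset.card_univ,
        Fintype.card_fin, nsmul_eq_mul]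
      ring
    rw [Finset.sum_congr rfl h2, Finset.sum_const, Finset.card_erase_of_mem
      (Finset.mem_univ _), Finset.card_univ, Fintype.card_fin, nsmul_eq_mul,
      Nat.cast_sub (by omega), Nat.cast_one]
    ring
  rw [Finset.sum_congr rfl fun i₁ _ => this i₁, Finset.sum_const, Finset.card_univ,
    Fintype.card_fin, nsmul_eq_mul]
  ring
end
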